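/- A time-like curve γ : I → 𝕃⁴ parametrized by proper time admits a generalized Bishop frame of type D if and only if there exist a smooth map D₁ : I → ℝ⁴ and a smooth function d₁ : I → ℝ such that, pointwise, ⟨D₁,D₁⟩ = 1, ⟨T,D₁⟩ = 0 and T' = d₁D₁. -/

import Mathlib

open Set Real

noncomputable section

/-- The Minkowski form on `ℝ⁴ = 𝕃⁴`: `⟨x,y⟩ = -x₀y₀ + x₁y₁ + x₂y₂ + x₃y₃`. -/
def mink (x y : Fin 4 → ℝ) : ℝ :=
  -(x 0 * y 0) + x 1 * y 1 + x 2 * y 2 + x 3 * y 3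

/-- `(T, Z₁, Z₂, Z₃)` is an orthonormal frame along a time-like curve with tangent `T`:
the `Zᵢ` are smooth on `I`, pairwise orthonormal (space-like) and orthogonal to `T`. -/
def OrthFrame (I : Set ℝ) (T Z₁ Z₂ Z₃ : ℝ → Fin 4 → ℝ) : Prop :=
  ContDiffOn ℝ (⊤ : ℕ∞) Z₁ I ∧ ContDiffOn ℝ (⊤ : ℕ∞) Z₂ I ∧ ContDiffOn ℝ (⊤ : ℕ∞) Z₃ I ∧
  ∀ s ∈ I,
    mink (Z₁ s) (Z₁ s) = 1 ∧ mink (Z₂ s) (Z₂ s) = 1 ∧ mink (Z₃ s) (Z₃ s) = 1 ∧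
    mink (Z₁ s) (Z₂ s) = 0 ∧ mink (Z₁ s) (Z₃ s) = 0 ∧ mink (Z₂ s) (Z₃ s) = 0 ∧
    mink (T s) (Z₁ s) = 0 ∧ mink (T s) (Z₂ s) = 0 ∧ mink (T s) (Z₃ s) = 0

/-- `γ` is a smooth time-like curve parametrized by proper time on `I`. -/
def ProperTime (I : Set ℝ) (γ : ℝ → Fin 4 → ℝ) : Prop :=
  ContDiffOn ℝ (⊤ : ℕ∞) γ I ∧ ∀ s ∈ I, mink (deriv γ s) (deriv γ s) = -1

/-- Three smooth real functions on `I`. -/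
def Smooth3 (I : Set ℝ) (x₁ x₂ x₃ : ℝ → ℝ) : Prop :=
  ContDiffOn ℝ (⊤ : ℕ∞) x₁ I ∧ ContDiffOn ℝ (⊤ : ℕ∞) x₂ I ∧ ContDiffOn ℝ (⊤ : ℕ∞) x₃ I

/-- `γ` admits a generalized Bishop frame of type B. -/
def AdmitsB (I : Set ℝ) (γ : ℝ → Fin 4 → ℝ) : Prop :=
  ∃ (Z₁ Z₂ Z₃ : ℝ → Fin 4 → ℝ) (x₁ x₂ x₃ : ℝ → ℝ),
    OrthFrame I (deriv γ) Z₁ Z₂ Z₃ ∧ Smooth3 I x₁ x₂ x₃ ∧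
    ∀ s ∈ I,
      deriv (deriv γ) s = x₁ s • Z₁ s + x₂ s • Z₂ s + x₃ s • Z₃ s ∧
      deriv Z₁ s = x₁ s • deriv γ s ∧
      deriv Z₂ s = x₂ s • deriv γ s ∧
      deriv Z₃ s = x₃ s • deriv γ s

/-- `γ` admits a generalized Bishop frame of type C. -/
def AdmitsC (I : Set ℝ) (γ : ℝ → Fin 4 → ℝ) : Prop :=
  ∃ (Z₁ Z₂ Z₃ : ℝ → Fin 4 → ℝ) (x₁ x₂ x₃ : ℝ → ℝ),
    OrthFrame I (deriv γ) Z₁ Z₂ Z₃ ∧ Smooth3 I x₁ x₂ x₃ ∧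
    ∀ s ∈ I,
      deriv (deriv γ) s = x₁ s • Z₁ s + x₂ s • Z₂ s ∧
      deriv Z₁ s = x₁ s • deriv γ s + x₃ s • Z₃ s ∧
      deriv Z₂ s = x₂ s • deriv γ s ∧
      deriv Z₃ s = (-(x₃ s)) • Z₁ s

/-- `γ` admits a generalized Bishop frame of type D. -/
def AdmitsD (I : Set ℝ) (γ : ℝ → Fin 4 → ℝ) : Prop :=
  ∃ (Z₁ Z₂ Z₃ : ℝ → Fin 4 → ℝ) (x₁ x₂ x₃ : ℝ → ℝ),
    OrthFrame I (deriv γ) Z₁ Z₂ Z₃ ∧ Smooth3 I x₁ x₂ x₃ ∧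
    ∀ s ∈ I,
      deriv (deriv γ) s = x₁ s • Z₁ s ∧
      deriv Z₁ s = x₁ s • deriv γ s + x₂ s • Z₂ s + x₃ s • Z₃ s ∧
      deriv Z₂ s = (-(x₂ s)) • Z₁ s ∧
      deriv Z₃ s = (-(x₃ s)) • Z₁ s

/-- `γ` admits a generalized Bishop frame of type F. -/
def AdmitsF (I : Set ℝ) (γ : ℝ → Fin 4 → ℝ) : Prop :=
  ∃ (Z₁ Z₂ Z₃ : ℝ → Fin 4 → ℝ) (x₁ x₂ x₃ : ℝ → ℝ),
    OrthFrame I (deriv γ) Z₁ Z₂ Z₃ ∧ Smooth3 I x₁ x₂ x₃ ∧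
    ∀ s ∈ I,
      deriv (deriv γ) s = x₁ s • Z₁ s ∧
      deriv Z₁ s = x₁ s • deriv γ s + x₂ s • Z₂ s ∧
      deriv Z₂ s = (-(x₂ s)) • Z₁ s + x₃ s • Z₃ s ∧
      deriv Z₃ s = (-(x₃ s)) • Z₂ s

/-!
A Bishop frame of type D provides `(Z₁, x₁)` directly. Conversely, complete `(T, D₁)` at one
instant by two unit vectors of the plane `{T, D₁}^⊥`, on which the Minkowski form is positive
definite, and transport them along the curve by the linear ODE `Z' = -⟨D₁', Z⟩ D₁`. Along
solutions every Minkowski product involving `Z₂, Z₃` has zero derivative, so the frame stays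
orthonormal, and expanding `D₁'` in it gives the type D equations with `x₁ = d₁` and
`xᵢ = ⟨D₁', Zᵢ⟩`. Being linear, the ODE has solutions on all of `I`: Picard–Lindelöf applies on
intervals of a uniform length, and the local solutions are glued.
-/

open scoped Topology NNReal ContDiff

section LinearODE

variable {E : Type*} [NormedAddCommGroup E] [NormedSpace ℝ E]

theorem IsIntegralCurveOn.exists_glue_Icc {v : ℝ → E → E} {a b c : ℝ} {z₁ z₂ : ℝ → E}
    (hac : a ≤ c) (hcb : c ≤ b) (h₁ : IsIntegralCurveOn z₁ v (Icc a c))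
    (h₂ : IsIntegralCurveOn z₂ v (Icc c b)) (hc : z₁ c = z₂ c) :
    ∃ z, EqOn z z₁ (Icc a c) ∧ EqOn z z₂ (Icc c b) ∧ IsIntegralCurveOn z v (Icc a b) := by
  classical
  set z : ℝ → E := fun t => if t ≤ c then z₁ t else z₂ t
  have e₁ : EqOn z z₁ (Icc a c) := fun t ht => if_pos ht.2
  have e₂ : EqOn z z₂ (Icc c b) := fun t ht => by
    rcases ht.1.eq_or_lt with rfl | h
    · exact (if_pos le_rfl).trans hc
    · exact if_neg h.not_ge
  refine ⟨z, e₁, e₂, fun t _ => ?_⟩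
  rw [← Icc_union_Icc_eq_Icc hac hcb]
  -- away from the closure of a piece, the derivative within that piece is vacuous
  refine HasDerivWithinAt.union ?_ ?_
  · by_cases ht : t ∈ Icc a c
    · exact (h₁ t ht).congr e₁ (e₁ ht) |>.congr_deriv (by rw [e₁ ht])
    · exact HasFDerivWithinAt.of_notMem_closure (by rwa [closure_Icc])
  · by_cases ht : t ∈ Icc c b
    · exact (h₂ t ht).congr e₂ (e₂ ht) |>.congr_deriv (by rw [e₂ ht])
    · exact HasFDerivWithinAt.of_notMem_closure (by rwa [closure_Icc])

lemma IsCompact.exists_nnnorm_le {F : Type*} [NormedAddCommGroup F] {f : ℝ → F} {s : Set ℝ}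
    (hs : IsCompact s) (hf : ContinuousOn f s) : ∃ K : ℝ≥0, ∀ t ∈ s, ‖f t‖₊ ≤ K := by
  obtain ⟨C, hC⟩ := hs.exists_bound_of_continuousOn hf
  exact ⟨C.toNNReal, fun t ht => by simpa using Real.toNNReal_le_toNNReal (hC t ht)⟩

lemma IsOpen.exists_Icc_subset {J : Set ℝ} (hJo : IsOpen J) (hJc : J.OrdConnected) {s t : ℝ}
    (hs : s ∈ J) (ht : t ∈ J) : ∃ α β, Icc α β ⊆ J ∧ s ∈ Ioo α β ∧ t ∈ Ioo α β := by
  obtain ⟨α, hα, hαJ⟩ :=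
    Filter.Eventually.exists_lt (p := (· ∈ J)) (hJo.mem_nhds (min_rec' (· ∈ J) hs ht))
  obtain ⟨β, hβ, hβJ⟩ :=
    Filter.Eventually.exists_gt (p := (· ∈ J)) (hJo.mem_nhds (max_rec' (· ∈ J) hs ht))
  rw [lt_min_iff] at hα
  rw [max_lt_iff] at hβ
  exact ⟨α, β, hJc.out hαJ hβJ, ⟨hα.1, hβ.1⟩, ⟨hα.2, hβ.2⟩⟩

lemma ContDiffOn.hasDerivAt_deriv {n : WithTop ℕ∞} {J : Set ℝ} {f : ℝ → E}
    (hf : ContDiffOn ℝ n f J) (hn : n ≠ 0) (hJo : IsOpen J) {t : ℝ} (ht : t ∈ J) :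
    HasDerivAt f (deriv f t) t :=
  ((hf.differentiableOn hn t ht).differentiableAt (hJo.mem_nhds ht)).hasDerivAt

variable {A : ℝ → E →L[ℝ] E}

theorem eqOn_of_hasDerivAt_clm_apply {J : Set ℝ} (hJo : IsOpen J) (hJc : J.OrdConnected)
    (hA : ContinuousOn A J) {f g : ℝ → E} {t₀ : ℝ} (ht₀ : t₀ ∈ J)
    (hf : ∀ t ∈ J, HasDerivAt f (A t (f t)) t) (hg : ∀ t ∈ J, HasDerivAt g (A t (g t)) t)
    (h : f t₀ = g t₀) : EqOn f g J := by
  intro t ht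
  obtain ⟨α, β, hαβ, htαβ, ht₀αβ⟩ := hJo.exists_Icc_subset hJc ht ht₀
  obtain ⟨K, hK⟩ := isCompact_Icc.exists_nnnorm_le (hA.mono hαβ)
  have hJ : Ioo α β ⊆ J := Ioo_subset_Icc_self.trans hαβ
  exact ODE_solution_unique_of_mem_Icc (v := fun s => A s) (s := fun _ => univ)
    (fun s hs => ((A s).lipschitz.weaken (hK s (Ioo_subset_Icc_self hs))).lipschitzOnWith)
    ht₀αβ (HasDerivAt.continuousOn fun s hs => hf s (hαβ hs)) (fun s hs => hf s (hJ hs))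
    (fun _ _ => trivial) (HasDerivAt.continuousOn fun s hs => hg s (hαβ hs))
    (fun s hs => hg s (hJ hs)) (fun _ _ => trivial) h (Ioo_subset_Icc_self htαβ)

theorem contDiffOn_of_hasDerivAt_clm_apply {J : Set ℝ} (hJo : IsOpen J)
    (hA : ContDiffOn ℝ ∞ A J) {z : ℝ → E} (hz : ∀ t ∈ J, HasDerivAt z (A t (z t)) t) :
    ContDiffOn ℝ ∞ z J := by
  have hdiff : DifferentiableOn ℝ z J := fun t ht =>
    (hz t ht).differentiableAt.differentiableWithinAt
  refine contDiffOn_infty.mpr fun n => ?_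
  induction n with
  | zero => exact contDiffOn_zero.mpr hdiff.continuousOn
  | succ n ih =>
    rw [Nat.cast_succ, contDiffOn_succ_iff_deriv_of_isOpen hJo]
    refine ⟨hdiff, by simp, ?_⟩
    exact ((hA.of_le (by exact_mod_cast le_top)).clm_apply ih).congr fun t ht => (hz t ht).deriv

variable [CompleteSpace E]

theorem exists_isIntegralCurveOn_Icc_of_norm_le {a b t₀ : ℝ} {M : ℝ≥0}
    (hA : ContinuousOn A (Icc a b)) (hM : ∀ t ∈ Icc a b, ‖A t‖₊ ≤ M)
    (hab : M * (b - a) ≤ 1 / 2) (ht₀ : t₀ ∈ Icc a b) (x : E) :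
    ∃ z, z t₀ = x ∧ IsIntegralCurveOn z (fun t => A t) (Icc a b) := by
  -- Picard–Lindelöf on the ball of radius `2‖x‖` about `0`: by linearity the admissible
  -- interval length does not depend on `x`.
  have hpl : IsPicardLindelof (fun t => A t) (⟨t₀, ht₀⟩ : Icc a b) 0 (2 * ‖x‖₊) ‖x‖₊
      (M * (2 * ‖x‖₊)) M := by
    refine ⟨fun t ht => ((A t).lipschitz.weaken (hM t ht)).lipschitzOnWith,
      fun y _ => hA.clm_apply continuousOn_const, fun t ht y hy => ?_, ?_⟩
    · rw [Metric.mem_closedBall, dist_zero_right] at hy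
      calc ‖A t y‖ ≤ ‖A t‖ * ‖y‖ := (A t).le_opNorm y
        _ ≤ M * (2 * ‖x‖) := by gcongr; exacts [hM t ht, hy]
    · have hmax : max (b - t₀) (t₀ - a) ≤ b - a :=
        max_le (by linarith [ht₀.1]) (by linarith [ht₀.2])
      simp only [NNReal.coe_mul, NNReal.coe_ofNat, coe_nnnorm]
      calc M * (2 * ‖x‖) * max (b - t₀) (t₀ - a) ≤ M * (2 * ‖x‖) * (b - a) := by gcongr
        _ = 2 * ‖x‖ * (M * (b - a)) := by ring
        _ ≤ 2 * ‖x‖ * (1 / 2) := by gcongr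
        _ = 2 * ‖x‖ - ‖x‖ := by ring
  exact hpl.exists_eq_forall_mem_Icc_hasDerivWithinAt (x := x) (by simp)

theorem exists_isIntegralCurveOn_Icc {a b t₀ : ℝ} (hA : ContinuousOn A (Icc a b))
    (ht₀ : t₀ ∈ Icc a b) (x : E) :
    ∃ z, z t₀ = x ∧ IsIntegralCurveOn z (fun t => A t) (Icc a b) := by
  obtain ⟨K, hK⟩ := isCompact_Icc.exists_nnnorm_le hA
  set τ : ℝ := 1 / (2 * (K + 1))
  have hτ : 0 < τ := by positivity
  have hKτ : K * τ ≤ 1 / 2 := by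
    simp only [τ]; rw [mul_one_div, div_le_div_iff₀ (by positivity) two_pos]; linarith
  have short : ∀ a' b', a ≤ a' → b' ≤ b → b' - a' ≤ τ → ∀ t₀ ∈ Icc a' b', ∀ x : E,
      ∃ z, z t₀ = x ∧ IsIntegralCurveOn z (fun t => A t) (Icc a' b') :=
    fun a' b' ha hb hlen t₀ ht₀ x => exists_isIntegralCurveOn_Icc_of_norm_le
      (hA.mono (Icc_subset_Icc ha hb)) (fun t ht => hK t ⟨ha.trans ht.1, ht.2.trans hb⟩)
      (by nlinarith [K.coe_nonneg]) ht₀ x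
  have long (n : ℕ) : ∀ a' b', a ≤ a' → b' ≤ b → b' - a' ≤ n * τ → ∀ t₀ ∈ Icc a' b', ∀ x : E,
      ∃ z, z t₀ = x ∧ IsIntegralCurveOn z (fun t => A t) (Icc a' b') := by
    induction n with
    | zero => exact fun a' b' ha hb hlen => short a' b' ha hb (by simp at hlen; linarith)
    | succ n ih =>
      intro a' b' ha hb hlen t₀ ht₀ x
      by_cases hshort : b' - a' ≤ τ
      · exact short a' b' ha hb hshort t₀ ht₀ x
      set c := a' + τ
      have hac : a' ≤ c := by simp only [c]; linarith
      have hcb : c ≤ b' := by simp only [c]; linarith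
      have hlen' : b' - c ≤ n * τ := by push_cast at hlen; simp only [c]; linarith
      rcases le_total t₀ c with h | h
      · obtain ⟨z₁, hz₁, h₁⟩ := short a' c ha (hcb.trans hb) (by simp [c]) t₀ ⟨ht₀.1, h⟩ x
        obtain ⟨z₂, hz₂, h₂⟩ := ih c b' (ha.trans hac) hb hlen' c ⟨le_rfl, hcb⟩ (z₁ c)
        obtain ⟨z, e₁, -, hz⟩ := h₁.exists_glue_Icc hac hcb h₂ hz₂.symm
        exact ⟨z, (e₁ ⟨ht₀.1, h⟩).trans hz₁, hz⟩
      · obtain ⟨z₂, hz₂, h₂⟩ := ih c b' (ha.trans hac) hb hlen' t₀ ⟨h, ht₀.2⟩ x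
        obtain ⟨z₁, hz₁, h₁⟩ := short a' c ha (hcb.trans hb) (by simp [c]) c ⟨hac, le_rfl⟩ (z₂ c)
        obtain ⟨z, -, e₂, hz⟩ := h₁.exists_glue_Icc hac hcb h₂ hz₁
        exact ⟨z, (e₂ ⟨h, ht₀.2⟩).trans hz₂, hz⟩
  obtain ⟨n, hn⟩ := exists_nat_ge ((b - a) / τ)
  exact long n a b le_rfl le_rfl (by rwa [div_le_iff₀ hτ] at hn) t₀ ht₀ x

theorem exists_hasDerivAt_clm_apply {J : Set ℝ} (hJo : IsOpen J) (hJc : J.OrdConnected)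
    (hA : ContinuousOn A J) {t₀ : ℝ} (ht₀ : t₀ ∈ J) (x : E) :
    ∃ z, z t₀ = x ∧ ∀ t ∈ J, HasDerivAt z (A t (z t)) t := by
  have local_sol (t : ℝ) : ∃ U : Set ℝ, ∃ w : ℝ → E, t ∈ J → w t₀ = x ∧ t ∈ U ∧ t₀ ∈ U ∧
      U ⊆ J ∧ IsOpen U ∧ U.OrdConnected ∧ ∀ s ∈ U, HasDerivAt w (A s (w s)) s := by
    by_cases ht : t ∈ J
    · obtain ⟨α, β, hαβ, htαβ, ht₀αβ⟩ := hJo.exists_Icc_subset hJc ht ht₀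
      obtain ⟨w, hw₀, hw⟩ := exists_isIntegralCurveOn_Icc (hA.mono hαβ)
        (Ioo_subset_Icc_self ht₀αβ) x
      exact ⟨Ioo α β, w, fun _ => ⟨hw₀, htαβ, ht₀αβ, Ioo_subset_Icc_self.trans hαβ, isOpen_Ioo,
        ordConnected_Ioo, fun s hs =>
          (hw s (Ioo_subset_Icc_self hs)).hasDerivAt (Icc_mem_nhds hs.1 hs.2)⟩⟩
    · exact ⟨∅, 0, fun h => absurd h ht⟩
  choose U w hUw using local_sol
  refine ⟨fun t => w t t, (hUw t₀ ht₀).1, fun t ht => ?_⟩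
  obtain ⟨hwt₀, htU, ht₀U, hUJ, hUo, hUc, hwt⟩ := hUw t ht
  -- the local solutions around `t` and around any nearby `s` agree, by uniqueness on `U s ∩ U t`
  have hloc : (fun s => w s s) =ᶠ[𝓝 t] w t := by
    filter_upwards [hUo.mem_nhds htU] with s hs
    obtain ⟨hws₀, hsV, ht₀V, hVJ, hVo, hVc, hws⟩ := hUw s (hUJ hs)
    exact eqOn_of_hasDerivAt_clm_apply (hVo.inter hUo) (hVc.inter hUc)
      (hA.mono (inter_subset_left.trans hVJ)) ⟨ht₀V, ht₀U⟩ (fun r hr => hws r hr.1)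
      (fun r hr => hwt r hr.2) (hws₀.trans hwt₀.symm) ⟨hsV, hs⟩
  exact (hwt t htU).congr_of_eventuallyEq hloc

end LinearODE

@[simp] lemma mink_add_left (x y z : Fin 4 → ℝ) : mink (x + y) z = mink x z + mink y z := by
  simp only [mink, Pi.add_apply]; ring

@[simp] lemma mink_add_right (x y z : Fin 4 → ℝ) : mink x (y + z) = mink x y + mink x z := by
  simp only [mink, Pi.add_apply]; ring

@[simp] lemma mink_smul_left (c : ℝ) (x y : Fin 4 → ℝ) : mink (c • x) y = c * mink x y := by
  simp only [mink, Pi.smul_apply, smul_eq_mul]; ring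

@[simp] lemma mink_smul_right (c : ℝ) (x y : Fin 4 → ℝ) : mink x (c • y) = c * mink x y := by
  simp only [mink, Pi.smul_apply, smul_eq_mul]; ring

@[simp] lemma mink_zero_left (y : Fin 4 → ℝ) : mink 0 y = 0 := by
  simp [mink]

lemma mink_comm (x y : Fin 4 → ℝ) : mink x y = mink y x := by
  simp only [mink]; ring

def minkL : (Fin 4 → ℝ) →L[ℝ] (Fin 4 → ℝ) →L[ℝ] ℝ :=
  LinearMap.toContinuousLinearMap <| LinearMap.toContinuousLinearMap.toLinearMap ∘ₗ
    LinearMap.mk₂ ℝ mink mink_add_left mink_smul_left mink_add_right mink_smul_right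

@[simp] lemma minkL_apply (x y : Fin 4 → ℝ) : minkL x y = mink x y := rfl

lemma HasDerivAt.mink {f g : ℝ → Fin 4 → ℝ} {f' g' : Fin 4 → ℝ} {t : ℝ}
    (hf : HasDerivAt f f' t) (hg : HasDerivAt g g' t) :
    HasDerivAt (fun s => mink (f s) (g s)) (mink f' (g t) + mink (f t) g') t := by
  simpa using (minkL.hasFDerivAt.comp_hasDerivAt t hf).clm_apply hg

lemma ContDiffOn.mink {n : WithTop ℕ∞} {f g : ℝ → Fin 4 → ℝ} {s : Set ℝ}
    (hf : ContDiffOn ℝ n f s) (hg : ContDiffOn ℝ n g s) :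
    ContDiffOn ℝ n (fun t => mink (f t) (g t)) s :=
  (minkL.contDiff.comp_contDiffOn hf).clm_apply hg

lemma mink_add_mink_eq_zero_of_hasDerivAt {f g : ℝ → Fin 4 → ℝ} {f' g' : Fin 4 → ℝ} {t c : ℝ}
    (hf : HasDerivAt f f' t) (hg : HasDerivAt g g' t)
    (hc : ∀ᶠ s in 𝓝 t, mink (f s) (g s) = c) : mink f' (g t) + mink (f t) g' = 0 :=
  (hf.mink hg).unique ((hasDerivAt_const t c).congr_of_eventuallyEq hc)

lemma mink_eq_of_hasDerivAt {I : Set ℝ} (hIo : IsOpen I) (hIc : IsPreconnected I)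
    {f g f' g' : ℝ → Fin 4 → ℝ} (hf : ∀ t ∈ I, HasDerivAt f (f' t) t)
    (hg : ∀ t ∈ I, HasDerivAt g (g' t) t)
    (h : ∀ t ∈ I, mink (f' t) (g t) + mink (f t) (g' t) = 0)
    {s t : ℝ} (hs : s ∈ I) (ht : t ∈ I) : mink (f s) (g s) = mink (f t) (g t) :=
  hIo.is_const_of_deriv_eq_zero hIc
    (fun r hr => ((hf r hr).mink (hg r hr)).differentiableAt.differentiableWithinAt)
    (fun r hr => by rw [((hf r hr).mink (hg r hr)).deriv, h r hr]; rfl) hs ht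

lemma mink_self_pos_of_orthogonal {T x : Fin 4 → ℝ} (hT : mink T T = -1) (hTx : mink T x = 0)
    (hx : x ≠ 0) : 0 < mink x x := by
  simp only [mink] at *
  set S := x 1 ^ 2 + x 2 ^ 2 + x 3 ^ 2
  -- Cauchy–Schwarz for the spatial parts, via Lagrange's identity
  have hCS : (T 0 * x 0) ^ 2 ≤ (T 0 ^ 2 - 1) * S := by
    rw [show T 0 * x 0 = T 1 * x 1 + T 2 * x 2 + T 3 * x 3 by linarith,
      show T 0 ^ 2 - 1 = T 1 ^ 2 + T 2 ^ 2 + T 3 ^ 2 by linarith]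
    nlinarith [sq_nonneg (T 1 * x 2 - T 2 * x 1), sq_nonneg (T 1 * x 3 - T 3 * x 1),
      sq_nonneg (T 2 * x 3 - T 3 * x 2)]
  have hT0 : 1 ≤ T 0 ^ 2 := by nlinarith [sq_nonneg (T 1), sq_nonneg (T 2), sq_nonneg (T 3)]
  by_contra hle
  have hS : S = 0 := by nlinarith [sq_nonneg (x 1), sq_nonneg (x 2), sq_nonneg (x 3)]
  have hx0 : x 0 ^ 2 = 0 := by nlinarith [sq_nonneg (x 0)]
  refine hx (funext fun i => ?_)
  fin_cases i <;> simp <;> nlinarith [sq_nonneg (x 1), sq_nonneg (x 2), sq_nonneg (x 3)]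

lemma exists_ne_zero_mink_eq_zero (p q r : Fin 4 → ℝ) :
    ∃ x ≠ 0, mink p x = 0 ∧ mink q x = 0 ∧ mink r x = 0 := by
  let f : (Fin 4 → ℝ) →ₗ[ℝ] Fin 3 → ℝ := LinearMap.pi ![minkL p, minkL q, minkL r]
  obtain ⟨x, hx, hx0⟩ := Submodule.exists_mem_ne_zero_of_ne_bot
    (LinearMap.ker_ne_bot_of_finrank_lt (f := f) (by simp))
  have := congrFun (LinearMap.mem_ker.mp hx)
  exact ⟨x, hx0, by simpa [f] using this 0, by simpa [f] using this 1, by simpa [f] using this 2⟩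

lemma exists_unit_mink_orthogonal {T : Fin 4 → ℝ} (hT : mink T T = -1) (q r : Fin 4 → ℝ) :
    ∃ u, mink u u = 1 ∧ mink T u = 0 ∧ mink q u = 0 ∧ mink r u = 0 := by
  obtain ⟨x, hx, hTx, hqx, hrx⟩ := exists_ne_zero_mink_eq_zero T q r
  have hpos := mink_self_pos_of_orthogonal hT hTx hx
  refine ⟨(√(mink x x))⁻¹ • x, ?_, by simp [hTx], by simp [hqx], by simp [hrx]⟩
  rw [mink_smul_left, mink_smul_right, ← mul_assoc, ← mul_inv, Real.mul_self_sqrt hpos.le,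
    inv_mul_cancel₀ hpos.ne']

lemma exists_mink_orthonormal_completion {T : Fin 4 → ℝ} (hT : mink T T = -1) (D : Fin 4 → ℝ) :
    ∃ u v, mink u u = 1 ∧ mink v v = 1 ∧ mink u v = 0 ∧
      mink T u = 0 ∧ mink T v = 0 ∧ mink D u = 0 ∧ mink D v = 0 := by
  obtain ⟨u, huu, hTu, hDu, -⟩ := exists_unit_mink_orthogonal hT D D
  obtain ⟨v, hvv, hTv, hDv, huv⟩ := exists_unit_mink_orthogonal hT D u
  exact ⟨u, v, huu, hvv, huv, hTu, hTv, hDu, hDv⟩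

lemma mink_sum_smul {v : Fin 4 → Fin 4 → ℝ} {ε : Fin 4 → ℝ}
    (hv : ∀ i j, mink (v i) (v j) = if i = j then ε i else 0) (c : Fin 4 → ℝ) (j : Fin 4) :
    mink (∑ i, c i • v i) (v j) = c j * ε j := by
  rw [← minkL_apply, map_sum]
  simp [hv]

lemma eq_sum_of_mink_orthonormal {v : Fin 4 → Fin 4 → ℝ} {ε : Fin 4 → ℝ} (hε : ∀ i, ε i ≠ 0)
    (hv : ∀ i j, mink (v i) (v j) = if i = j then ε i else 0) (w : Fin 4 → ℝ) :
    w = ∑ i, (mink w (v i) / ε i) • v i := by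
  have hli : LinearIndependent ℝ v := Fintype.linearIndependent_iff.mpr fun g hg i => by
    have h := mink_sum_smul hv g i
    rw [hg, mink_zero_left] at h
    exact (mul_eq_zero.mp h.symm).resolve_right (hε i)
  have hw : w ∈ Submodule.span ℝ (Set.range v) := by
    rw [hli.span_eq_top_of_card_eq_finrank' (by simp)]; trivial
  obtain ⟨c, rfl⟩ := (Submodule.mem_span_range_iff_exists_fun ℝ).mp hw
  simp_rw [mink_sum_smul hv, mul_div_cancel_right₀ _ (hε _)]

lemma OrthFrame.eq_expansion {I : Set ℝ} {T Z₁ Z₂ Z₃ : ℝ → Fin 4 → ℝ}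
    (hF : OrthFrame I T Z₁ Z₂ Z₃) {s : ℝ} (hs : s ∈ I) (hT : mink (T s) (T s) = -1)
    (w : Fin 4 → ℝ) :
    w = (-mink w (T s)) • T s + mink w (Z₁ s) • Z₁ s + mink w (Z₂ s) • Z₂ s +
      mink w (Z₃ s) • Z₃ s := by
  obtain ⟨h11, h22, h33, h12, h13, h23, hT1, hT2, hT3⟩ := hF.2.2.2 s hs
  have := eq_sum_of_mink_orthonormal (v := ![T s, Z₁ s, Z₂ s, Z₃ s]) (ε := ![-1, 1, 1, 1])
    (fun i => by fin_cases i <;> simp)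
    (fun i j => by fin_cases i <;> fin_cases j <;> simp [mink_comm, *]) w
  simpa [Fin.sum_univ_four, div_neg] using this

def IsNormalTransport (I : Set ℝ) (D Y : ℝ → Fin 4 → ℝ) : Prop :=
  ∀ s ∈ I, HasDerivAt Y ((-mink (deriv D s) (Y s)) • D s) s

theorem exists_isNormalTransport {I : Set ℝ} (hIo : IsOpen I) (hIc : I.OrdConnected)
    {D : ℝ → Fin 4 → ℝ} (hD : ContDiffOn ℝ ∞ D I) {s₀ : ℝ} (hs₀ : s₀ ∈ I) (x : Fin 4 → ℝ) :
    ∃ Y, Y s₀ = x ∧ ContDiffOn ℝ ∞ Y I ∧ IsNormalTransport I D Y := by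
  set A : ℝ → (Fin 4 → ℝ) →L[ℝ] Fin 4 → ℝ := fun s => -(minkL (deriv D s)).smulRight (D s)
  have hA : ContDiffOn ℝ ∞ A I :=
    (((ContinuousLinearMap.smulRightL ℝ _ _ ∘L minkL).contDiff.comp_contDiffOn
      ((contDiffOn_infty_iff_deriv_of_isOpen hIo).mp hD).2).clm_apply hD).neg
  have hAY (s : ℝ) (y : Fin 4 → ℝ) : A s y = (-mink (deriv D s) y) • D s := by
    simp [A, neg_smul]
  obtain ⟨Y, hY₀, hY⟩ := exists_hasDerivAt_clm_apply hIo hIc hA.continuousOn hs₀ x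
  exact ⟨Y, hY₀, contDiffOn_of_hasDerivAt_clm_apply hIo hA hY, fun s hs => hAY s (Y s) ▸ hY s hs⟩

namespace IsNormalTransport

variable {I : Set ℝ} {D Y Z : ℝ → Fin 4 → ℝ} {s t : ℝ}

theorem mink_normal_eq (hIo : IsOpen I) (hIc : IsPreconnected I)
    (hD : ∀ s ∈ I, HasDerivAt D (deriv D s) s) (hDD : ∀ s ∈ I, mink (D s) (D s) = 1)
    (hY : IsNormalTransport I D Y) (hs : s ∈ I) (ht : t ∈ I) :
    mink (Y s) (D s) = mink (Y t) (D t) :=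
  mink_eq_of_hasDerivAt hIo hIc hY hD
    (fun r hr => by rw [mink_smul_left, hDD r hr, mink_comm (Y r)]; ring) hs ht

theorem mink_eq (hIo : IsOpen I) (hIc : IsPreconnected I)
    (hY : IsNormalTransport I D Y) (hZ : IsNormalTransport I D Z)
    (hYD : ∀ s ∈ I, mink (Y s) (D s) = 0) (hZD : ∀ s ∈ I, mink (Z s) (D s) = 0)
    (hs : s ∈ I) (ht : t ∈ I) : mink (Y s) (Z s) = mink (Y t) (Z t) :=
  mink_eq_of_hasDerivAt hIo hIc hY hZ (fun r hr => by
    rw [mink_smul_left, mink_smul_right, mink_comm (D r), hYD r hr, hZD r hr]; ring) hs ht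

theorem mink_tangent_eq (hIo : IsOpen I) (hIc : IsPreconnected I)
    (hY : IsNormalTransport I D Y) (hYD : ∀ s ∈ I, mink (Y s) (D s) = 0)
    {T : ℝ → Fin 4 → ℝ} {d : ℝ → ℝ} (hT : ∀ s ∈ I, HasDerivAt T (d s • D s) s)
    (hTD : ∀ s ∈ I, mink (T s) (D s) = 0) (hs : s ∈ I) (ht : t ∈ I) :
    mink (Y s) (T s) = mink (Y t) (T t) :=
  mink_eq_of_hasDerivAt hIo hIc hY hT (fun r hr => by
    rw [mink_smul_left, mink_smul_right, mink_comm (D r), hTD r hr, hYD r hr]; ring) hs ht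

end IsNormalTransport

theorem exists_orthFrame_isNormalTransport {I : Set ℝ} (hIo : IsOpen I) (hIc : I.OrdConnected)
    {T D : ℝ → Fin 4 → ℝ} {d : ℝ → ℝ} (hT : ∀ s ∈ I, HasDerivAt T (d s • D s) s)
    (hTT : ∀ s ∈ I, mink (T s) (T s) = -1) (hD : ContDiffOn ℝ ∞ D I)
    (hDD : ∀ s ∈ I, mink (D s) (D s) = 1) (hTD : ∀ s ∈ I, mink (T s) (D s) = 0)
    {s₀ : ℝ} (hs₀ : s₀ ∈ I) :
    ∃ Z₂ Z₃, OrthFrame I T D Z₂ Z₃ ∧ IsNormalTransport I D Z₂ ∧ IsNormalTransport I D Z₃ := by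
  have hD' (s : ℝ) (hs : s ∈ I) := hD.hasDerivAt_deriv (by simp) hIo hs
  have hIp := hIc.isPreconnected
  obtain ⟨u, v, huu, hvv, huv, hTu, hTv, hDu, hDv⟩ :=
    exists_mink_orthonormal_completion (hTT s₀ hs₀) (D s₀)
  obtain ⟨Z₂, hZ₂₀, hZ₂s, hZ₂⟩ := exists_isNormalTransport hIo hIc hD hs₀ u
  obtain ⟨Z₃, hZ₃₀, hZ₃s, hZ₃⟩ := exists_isNormalTransport hIo hIc hD hs₀ v
  have h₂D : ∀ s ∈ I, mink (Z₂ s) (D s) = 0 := fun s hs => by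
    rw [hZ₂.mink_normal_eq hIo hIp hD' hDD hs hs₀, hZ₂₀, mink_comm, hDu]
  have h₃D : ∀ s ∈ I, mink (Z₃ s) (D s) = 0 := fun s hs => by
    rw [hZ₃.mink_normal_eq hIo hIp hD' hDD hs hs₀, hZ₃₀, mink_comm, hDv]
  refine ⟨Z₂, Z₃, ⟨hD, hZ₂s, hZ₃s, fun s hs => ?_⟩, hZ₂, hZ₃⟩
  refine ⟨hDD s hs, ?_, ?_, by rw [mink_comm, h₂D s hs], by rw [mink_comm, h₃D s hs], ?_,
    hTD s hs, ?_, ?_⟩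
  · rw [hZ₂.mink_eq hIo hIp hZ₂ h₂D h₂D hs hs₀, hZ₂₀, huu]
  · rw [hZ₃.mink_eq hIo hIp hZ₃ h₃D h₃D hs hs₀, hZ₃₀, hvv]
  · rw [hZ₂.mink_eq hIo hIp hZ₃ h₂D h₃D hs hs₀, hZ₂₀, hZ₃₀, huv]
  · rw [mink_comm, hZ₂.mink_tangent_eq hIo hIp h₂D hT hTD hs hs₀, hZ₂₀, mink_comm, hTu]
  · rw [mink_comm, hZ₃.mink_tangent_eq hIo hIp h₃D hT hTD hs hs₀, hZ₃₀, mink_comm, hTv]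

theorem admitsD_of_unit_normal {I : Set ℝ} (hIo : IsOpen I) (hIc : I.OrdConnected)
    {γ : ℝ → Fin 4 → ℝ} (hγ : ProperTime I γ) {D : ℝ → Fin 4 → ℝ} {d : ℝ → ℝ}
    (hD : ContDiffOn ℝ ∞ D I) (hd : ContDiffOn ℝ ∞ d I)
    (h : ∀ s ∈ I, mink (D s) (D s) = 1 ∧ mink (deriv γ s) (D s) = 0 ∧
      deriv (deriv γ) s = d s • D s) :
    AdmitsD I γ := by
  rcases I.eq_empty_or_nonempty with rfl | ⟨s₀, hs₀⟩
  · exact ⟨0, 0, 0, 0, 0, 0, by simp [OrthFrame, Smooth3]⟩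
  have hT := ((contDiffOn_infty_iff_deriv_of_isOpen hIo).mp hγ.1).2
  have hD' := ((contDiffOn_infty_iff_deriv_of_isOpen hIo).mp hD).2
  have hT' : ∀ s ∈ I, HasDerivAt (deriv γ) (d s • D s) s := fun s hs =>
    (h s hs).2.2 ▸ hT.hasDerivAt_deriv (by simp) hIo hs
  obtain ⟨Z₂, Z₃, hF, hZ₂, hZ₃⟩ := exists_orthFrame_isNormalTransport hIo hIc hT' hγ.2 hD
    (fun s hs => (h s hs).1) (fun s hs => (h s hs).2.1) hs₀
  refine ⟨D, Z₂, Z₃, d, fun s => mink (deriv D s) (Z₂ s), fun s => mink (deriv D s) (Z₃ s), hF,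
    ⟨hd, hD'.mink hF.2.1, hD'.mink hF.2.2.1⟩,
    fun s hs => ⟨(h s hs).2.2, ?_, (hZ₂ s hs).deriv, (hZ₃ s hs).deriv⟩⟩
  have hDs := hD.hasDerivAt_deriv (by simp) hIo hs
  have hDD' : mink (deriv D s) (D s) = 0 := by
    have := mink_add_mink_eq_zero_of_hasDerivAt hDs hDs
      (Filter.eventually_of_mem (hIo.mem_nhds hs) fun r hr => (h r hr).1)
    rw [mink_comm (D s)] at this; linarith
  have hTD' : mink (deriv D s) (deriv γ s) = -d s := by
    have := mink_add_mink_eq_zero_of_hasDerivAt (hT' s hs) hDs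
      (Filter.eventually_of_mem (hIo.mem_nhds hs) fun r hr => (h r hr).2.1)
    rw [mink_smul_left, (h s hs).1, mink_comm] at this; linarith
  conv_lhs => rw [hF.eq_expansion hs (hγ.2 s hs) (deriv D s)]
  simp [hDD', hTD']

/-- a time-like curve parametrized by proper time admits a generalized
Bishop frame of type D iff there is a smooth unit space-like normal field `D₁` and a
smooth function `d₁` with `T' = d₁ D₁`. -/
theorem stmt_9 (I : Set ℝ) (hIopen : IsOpen I) (hIconn : I.OrdConnected)
    (γ : ℝ → Fin 4 → ℝ) (hγ : ProperTime I γ) :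
    AdmitsD I γ ↔
      ∃ (D₁ : ℝ → Fin 4 → ℝ) (d₁ : ℝ → ℝ),
        ContDiffOn ℝ (⊤ : ℕ∞) D₁ I ∧ ContDiffOn ℝ (⊤ : ℕ∞) d₁ I ∧
        ∀ s ∈ I,
          mink (D₁ s) (D₁ s) = 1 ∧ mink (deriv γ s) (D₁ s) = 0 ∧
          deriv (deriv γ) s = d₁ s • D₁ s := by
  constructor
  · rintro ⟨Z₁, _, _, x₁, _, _, ⟨hZ₁, -, -, horth⟩, ⟨hx₁, -, -⟩, heqs⟩
    exact ⟨Z₁, x₁, hZ₁, hx₁, fun s hs =>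
      ⟨(horth s hs).1, (horth s hs).2.2.2.2.2.2.1, (heqs s hs).1⟩⟩
  · rintro ⟨D₁, d₁, hD₁, hd₁, h⟩
    exact admitsD_of_unit_normal hIopen hIconn hγ hD₁ hd₁ h
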